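/- arXiv:1605.02077 — 2 statements merged into one kernel-verified Lean document; each statement's English description precedes it below -/
import Mathlib

section
/- Let J ⊆ J_f, define λ_{−J} := max_{j ∈ J_f∖J} |λ_j| (0 if J_f∖J = ∅), and for n ∈ ℕ set h_J(n) := ∑_{j∈J} (q_jᵀ f) · λ_jⁿ · h_j ∈ ℝ^d. Then for every initial probability vector π₀ and every n ∈ ℕ, d_f(π₀ᵀ Pⁿ, π) ≤ | (π₀ − π)ᵀ h_J(n) | + √( (∑_i π i · (f i)²) / πmin ) · λ_{−J}ⁿ. -/
open Finset

noncomputable section MarkovSetup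

variable {d : ℕ}

/-- `P` is a transition matrix: nonnegative entries, rows summing to one. -/
def IsTransMat (P : Matrix (Fin d) (Fin d) ℝ) : Prop :=
  (∀ i j, 0 ≤ P i j) ∧ (∀ i, ∑ j, P i j = 1)

/-- Irreducibility of the chain. -/
def IsIrreducibleMat (P : Matrix (Fin d) (Fin d) ℝ) : Prop :=
  ∀ i j, ∃ n : ℕ, 0 < (P ^ n) i j

/-- Aperiodicity of the chain (for each state, eventually positive return probabilities). -/
def IsAperiodicMat (P : Matrix (Fin d) (Fin d) ℝ) : Prop :=
  ∀ i, ∃ N : ℕ, ∀ n, N ≤ n → 0 < (P ^ n) i i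

/-- A probability vector. -/
def IsProbVec (p : Fin d → ℝ) : Prop := (∀ i, 0 ≤ p i) ∧ ∑ i, p i = 1

/-- `π` is the stationary distribution of `P`, with strictly positive entries. -/
def IsStationaryDist (P : Matrix (Fin d) (Fin d) ℝ) (π : Fin d → ℝ) : Prop :=
  (∀ i, 0 < π i) ∧ (∑ i, π i = 1) ∧ (∀ j, ∑ i, π i * P i j = π j)

/-- Reversibility of `P` with respect to `π`. -/
def IsReversibleMat (P : Matrix (Fin d) (Fin d) ℝ) (π : Fin d → ℝ) : Prop :=
  ∀ i j, π i * P i j = π j * P j i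

/-- The `f`-discrepancy `d_f(p, q) = |∑ᵢ pᵢ fᵢ − ∑ᵢ qᵢ fᵢ|`. -/
def fDisc (f p q : Fin d → ℝ) : ℝ := |∑ i, p i * f i - ∑ i, q i * f i|

/-- The `f`-mixing time `T_f(δ) = min {n ≥ 1 : ∀ i, d_f(δᵢᵀ Pⁿ, π) ≤ δ}`. -/
def fMixTime (P : Matrix (Fin d) (Fin d) ℝ) (π f : Fin d → ℝ) (δ : ℝ) : ℕ :=
  sInf {n : ℕ | 1 ≤ n ∧ ∀ i, fDisc f (fun j => (P ^ n) i j) π ≤ δ}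

/-- Total variation distance between probability vectors. -/
def tvDist (p q : Fin d → ℝ) : ℝ := (1 / 2) * ∑ i, |p i - q i|

/-- Mass of a trajectory `(X₀, …, X_N)` under the chain `P` started from `π₀`. -/
def pathMass (P : Matrix (Fin d) (Fin d) ℝ) (π₀ : Fin d → ℝ) (N : ℕ)
    (x : Fin (N + 1) → Fin d) : ℝ :=
  π₀ (x 0) * ∏ n : Fin N, P (x n.castSucc) (x n.succ)

open scoped Classical in
/-- Probability of an event under the trajectory law of `(X₀, …, X_N)`. -/
def pathProb (P : Matrix (Fin d) (Fin d) ℝ) (π₀ : Fin d → ℝ) (N : ℕ)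
    (E : (Fin (N + 1) → Fin d) → Prop) : ℝ :=
  ∑ x : Fin (N + 1) → Fin d, if E x then pathMass P π₀ N x else 0

/-- Expectation of a functional of the trajectory `(X₀, …, X_N)`. -/
def pathExp (P : Matrix (Fin d) (Fin d) ℝ) (π₀ : Fin d → ℝ) (N : ℕ)
    (g : (Fin (N + 1) → Fin d) → ℝ) : ℝ :=
  ∑ x : Fin (N + 1) → Fin d, pathMass P π₀ N x * g x

end MarkovSetup

lemma aux_col_orth {d : ℕ} (γ : Fin d → Fin d → ℝ)
    (horth : ∀ j k, ∑ i, γ j i * γ k i = if j = k then (1:ℝ) else 0) :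
    ∀ i k, ∑ j, γ j i * γ j k = if i = k then (1:ℝ) else 0 := by
  have h1 : (Matrix.of γ) * (Matrix.of γ).transpose = 1 := by
    ext j k
    simpa [Matrix.mul_apply, Matrix.one_apply] using horth j k
  have h2 : (Matrix.of γ).transpose * (Matrix.of γ) = 1 := mul_eq_one_comm.mp h1
  intro i k
  have := congrFun (congrFun h2 i) k
  simpa [Matrix.mul_apply, Matrix.one_apply, mul_comm] using this

lemma aux_expand_basis {d : ℕ} (γ : Fin d → Fin d → ℝ)
    (horth : ∀ j k, ∑ i, γ j i * γ k i = if j = k then (1:ℝ) else 0)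
    (v : Fin d → ℝ) (i : Fin d) :
    ∑ j, (∑ k, γ j k * v k) * γ j i = v i := by
  have hc := aux_col_orth γ horth
  have h1 : ∀ j, (∑ k, γ j k * v k) * γ j i = ∑ k, v k * (γ j k * γ j i) := by
    intro j; rw [Finset.sum_mul]; exact Finset.sum_congr rfl fun k _ => by ring
  simp_rw [h1]
  rw [Finset.sum_comm]
  simp_rw [← Finset.mul_sum, hc]
  simp

lemma aux_parseval {d : ℕ} (γ : Fin d → Fin d → ℝ)
    (horth : ∀ j k, ∑ i, γ j i * γ k i = if j = k then (1:ℝ) else 0)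
    (v : Fin d → ℝ) :
    ∑ j, (∑ k, γ j k * v k) ^ 2 = ∑ i, v i ^ 2 := by
  have h1 : ∀ j, (∑ k, γ j k * v k) ^ 2 = ∑ i, ((∑ k, γ j k * v k) * γ j i) * v i := by
    intro j
    rw [sq, Finset.mul_sum]
    exact Finset.sum_congr rfl fun i _ => by ring
  simp_rw [h1]
  rw [Finset.sum_comm]
  apply Finset.sum_congr rfl
  intro i _
  rw [← Finset.sum_mul, aux_expand_basis γ horth v i, sq]


/-- oracle `f`-discrepancy bound (Lemma `lem:mix-gap-all-oracle`). -/
theorem f_disc_oracle_bound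
    {d : ℕ} (hd : 0 < d)
    (P : Matrix (Fin d) (Fin d) ℝ) (π f : Fin d → ℝ)
    (hP : IsTransMat P) (hirr : IsIrreducibleMat P) (haper : IsAperiodicMat P)
    (hπ : IsStationaryDist P π) (hrev : IsReversibleMat P π)
    (hf : ∀ i, f i ∈ Set.Icc (0 : ℝ) 1)
    (πmin : ℝ) (hπmin : πmin = Finset.univ.inf' ⟨⟨0, hd⟩, Finset.mem_univ _⟩ π)
    (A : Matrix (Fin d) (Fin d) ℝ)
    (hA : ∀ i j, A i j = Real.sqrt (π i) * P i j / Real.sqrt (π j))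
    (lam : Fin d → ℝ) (γ : Fin d → Fin d → ℝ)
    (horth : ∀ j k, ∑ i, γ j i * γ k i = if j = k then (1 : ℝ) else 0)
    (heig : ∀ j, A.mulVec (γ j) = lam j • γ j)
    (hlam0 : lam ⟨0, hd⟩ = 1) (hmono : ∀ j k : Fin d, j ≤ k → lam k ≤ lam j)
    (hlt1 : ∀ j : Fin d, j ≠ ⟨0, hd⟩ → lam j < 1) (hgtm1 : ∀ j, (-1 : ℝ) < lam j)
    (hγ0 : ∀ i, γ ⟨0, hd⟩ i = Real.sqrt (π i))
    (q : Fin d → Fin d → ℝ) (hq : ∀ j i, q j i = Real.sqrt (π i) * γ j i)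
    (hv : Fin d → Fin d → ℝ) (hhv : ∀ j i, hv j i = γ j i / Real.sqrt (π i))
    (Jf : Finset (Fin d))
    (hJf : ∀ j, j ∈ Jf ↔ (j ≠ ⟨0, hd⟩ ∧ ∑ i, q j i * f i ≠ 0))
    (J : Finset (Fin d)) (hJsub : J ⊆ Jf)
    (lamNegJ : ℝ)
    (hlamNegJ : lamNegJ =
      if hne : (Jf \ J).Nonempty then (Jf \ J).sup' hne (fun j => |lam j|) else 0)
    (hJn : ℕ → Fin d → ℝ)
    (hhJn : ∀ n i, hJn n i = ∑ j ∈ J, (∑ i', q j i' * f i') * lam j ^ n * hv j i) :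
    ∀ π₀ : Fin d → ℝ, IsProbVec π₀ → ∀ n : ℕ,
      fDisc f (Matrix.vecMul π₀ (P ^ n)) π ≤
        |∑ i, (π₀ i - π i) * hJn n i| +
          Real.sqrt ((∑ i, π i * f i ^ 2) / πmin) * lamNegJ ^ n := by
  intro π₀ hπ₀ n
  unfold fDisc
  obtain ⟨hπpos, hπsum, hπstat⟩ := hπ
  obtain ⟨hπ₀pos, hπ₀sum⟩ := hπ₀
  have hsp : ∀ i, 0 < Real.sqrt (π i) := fun i => Real.sqrt_pos.mpr (hπpos i)
  have hπminpos : 0 < πmin := by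
    obtain ⟨i, _, hi⟩ := Finset.exists_mem_eq_inf'
      (⟨⟨0, hd⟩, Finset.mem_univ _⟩ : (Finset.univ : Finset (Fin d)).Nonempty) π
    rw [hπmin, hi]; exact hπpos i
  have hπminle : ∀ i, πmin ≤ π i := fun i => by
    rw [hπmin]; exact Finset.inf'_le _ (Finset.mem_univ i)
  set C : Fin d → ℝ := fun j => ∑ i, q j i * f i with hC
  set B : Fin d → ℝ := fun j => ∑ i, (π₀ i - π i) * hv j i with hB
  have hCdef : ∀ j : Fin d, (∑ i', q j i' * f i') = C j := fun j => rfl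
  have hBdef : ∀ j : Fin d, (∑ i, (π₀ i - π i) * hv j i) = B j := fun j => rfl
  have hCγ : ∀ j, C j = ∑ k, γ j k * (Real.sqrt (π k) * f k) := by
    intro j
    refine Finset.sum_congr rfl fun k _ => ?_
    rw [hq]; ring
  have hBγ : ∀ j, B j = ∑ k, γ j k * ((π₀ k - π k) / Real.sqrt (π k)) := by
    intro j
    refine Finset.sum_congr rfl fun k _ => ?_
    rw [hhv]; ring
  have hfdec : ∀ i, f i = ∑ j, C j * hv j i := by
    intro i
    have he := aux_expand_basis γ horth (fun k => Real.sqrt (π k) * f k) i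
    have h1 : ∑ j, C j * hv j i = (∑ j, C j * γ j i) / Real.sqrt (π i) := by
      rw [Finset.sum_div]
      refine Finset.sum_congr rfl fun j _ => ?_
      rw [hhv]; ring
    have h2 : ∑ j, C j * γ j i = Real.sqrt (π i) * f i := by
      rw [← he]; exact Finset.sum_congr rfl fun j _ => by rw [hCγ]
    rw [h1, h2, mul_comm, mul_div_assoc, div_self (hsp i).ne', mul_one]
  have hPhv : ∀ j, P.mulVec (hv j) = lam j • hv j := by
    intro j
    funext i
    have hA' : ∑ k, A i k * γ j k = lam j * γ j i := by
      have := congrFun (heig j) i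
      simpa [Matrix.mulVec, dotProduct] using this
    have h1 : ∑ k, A i k * γ j k = Real.sqrt (π i) * ∑ k, P i k * hv j k := by
      rw [Finset.mul_sum]
      refine Finset.sum_congr rfl fun k _ => ?_
      rw [hA, hhv]; ring
    rw [h1] at hA'
    have h2 : ∑ k, P i k * hv j k = lam j * γ j i / Real.sqrt (π i) :=
      (eq_div_iff (hsp i).ne').mpr (by linarith [hA'])
    simp only [Pi.smul_apply, smul_eq_mul, Matrix.mulVec, dotProduct]
    rw [h2, hhv]; ring
  have hPn : ∀ j (m : ℕ), (P ^ m).mulVec (hv j) = (lam j ^ m) • hv j := by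
    intro j m
    induction m with
    | zero => simp [Matrix.one_mulVec]
    | succ m ih =>
      rw [pow_succ, ← Matrix.mulVec_mulVec, hPhv, Matrix.mulVec_smul, ih, smul_smul, ← pow_succ']
  have hstat : ∀ m, Matrix.vecMul π (P ^ m) = π := by
    intro m
    induction m with
    | zero => simp
    | succ m ih =>
      rw [pow_succ, ← Matrix.vecMul_vecMul, ih]
      funext jj
      simpa [Matrix.vecMul, dotProduct] using hπstat jj
  have hswap : ∀ p : Fin d → ℝ, ∑ i, Matrix.vecMul p (P ^ n) i * f i
      = ∑ k, p k * ((P ^ n).mulVec f) k := by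
    intro p
    simp only [Matrix.vecMul, Matrix.mulVec, dotProduct]
    simp_rw [Finset.sum_mul, Finset.mul_sum]
    rw [Finset.sum_comm]
    exact Finset.sum_congr rfl fun k _ => Finset.sum_congr rfl fun i _ => by ring
  have hmf : ∀ k, ((P ^ n).mulVec f) k = ∑ j, C j * (lam j ^ n * hv j k) := by
    intro k
    simp only [Matrix.mulVec, dotProduct]
    calc ∑ i, (P ^ n) k i * f i = ∑ i, ∑ j, C j * ((P ^ n) k i * hv j i) := by
          refine Finset.sum_congr rfl fun i _ => ?_
          rw [hfdec i, Finset.mul_sum]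
          exact Finset.sum_congr rfl fun j _ => by ring
      _ = ∑ j, C j * ∑ i, (P ^ n) k i * hv j i := by
          rw [Finset.sum_comm]
          exact Finset.sum_congr rfl fun j _ => (Finset.mul_sum _ _ _).symm
      _ = ∑ j, C j * (lam j ^ n * hv j k) := by
          refine Finset.sum_congr rfl fun j _ => ?_
          congr 1
          have := congrFun (hPn j n) k
          simpa [Matrix.mulVec, dotProduct] using this
  have hkey : (∑ i, Matrix.vecMul π₀ (P ^ n) i * f i) - ∑ i, π i * f i
      = ∑ j, C j * lam j ^ n * B j := by
    have hπf : ∑ i, π i * f i = ∑ k, π k * ((P ^ n).mulVec f) k := by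
      rw [← hswap π, hstat n]
    rw [hswap π₀, hπf, ← Finset.sum_sub_distrib]
    calc ∑ k, (π₀ k * ((P ^ n).mulVec f) k - π k * ((P ^ n).mulVec f) k)
        = ∑ k, ∑ j, C j * lam j ^ n * ((π₀ k - π k) * hv j k) := by
          refine Finset.sum_congr rfl fun k _ => ?_
          rw [hmf k, ← sub_mul, Finset.mul_sum]
          exact Finset.sum_congr rfl fun j _ => by ring
      _ = ∑ j, C j * lam j ^ n * B j := by
          rw [Finset.sum_comm]
          refine Finset.sum_congr rfl fun j _ => ?_
          rw [← Finset.mul_sum, hBdef]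
  have hv0 : ∀ i, hv ⟨0, hd⟩ i = 1 := by
    intro i; rw [hhv, hγ0, div_self (hsp i).ne']
  have hzero : ∀ j ∈ (Finset.univ : Finset (Fin d)), j ∉ Jf → C j * lam j ^ n * B j = 0 := by
    intro j _ hj
    rw [hJf] at hj
    push_neg at hj
    by_cases h0 : j = ⟨0, hd⟩
    · have hB0 : B j = 0 := by
        subst h0
        rw [← hBdef]
        simp_rw [hv0, mul_one]
        rw [Finset.sum_sub_distrib, hπ₀sum, hπsum, sub_self]
      rw [hB0, mul_zero]
    · have hC0 : C j = 0 := hj h0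
      rw [hC0, zero_mul, zero_mul]
  have hsplit : ∑ j, C j * lam j ^ n * B j =
      (∑ j ∈ J, C j * lam j ^ n * B j) + ∑ j ∈ Jf \ J, C j * lam j ^ n * B j := by
    rw [← Finset.sum_subset (Finset.subset_univ Jf) hzero, ← Finset.sum_sdiff hJsub]
    exact add_comm _ _
  have hJpart : ∑ i, (π₀ i - π i) * hJn n i = ∑ j ∈ J, C j * lam j ^ n * B j := by
    have h1 : ∀ i, (π₀ i - π i) * hJn n i
        = ∑ j ∈ J, C j * lam j ^ n * ((π₀ i - π i) * hv j i) := by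
      intro i
      rw [hhJn]
      simp only [hCdef]
      rw [Finset.mul_sum]
      exact Finset.sum_congr rfl fun j _ => by ring
    simp_rw [h1]
    rw [Finset.sum_comm]
    refine Finset.sum_congr rfl fun j _ => ?_
    rw [← Finset.mul_sum, hBdef]
  have hmain : |∑ i, Matrix.vecMul π₀ (P ^ n) i * f i - ∑ i, π i * f i| =
      |(∑ i, (π₀ i - π i) * hJn n i) + ∑ j ∈ Jf \ J, C j * lam j ^ n * B j| := by
    rw [hkey, hsplit, ← hJpart]
  rw [hmain]
  refine le_trans (abs_add_le _ _) (add_le_add_right ?_ _)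
  -- tail bound
  have hlamnn : 0 ≤ lamNegJ := by
    rw [hlamNegJ]
    split
    · rename_i hne
      obtain ⟨j, hj⟩ := hne
      exact le_trans (abs_nonneg (lam j)) (Finset.le_sup' (fun j => |lam j|) hj)
    · exact le_refl 0
  have hle : ∀ j ∈ Jf \ J, |lam j| ≤ lamNegJ := by
    intro j hj
    rw [hlamNegJ, dif_pos ⟨j, hj⟩]
    exact Finset.le_sup' (fun j => |lam j|) hj
  have h1 : |∑ j ∈ Jf \ J, C j * lam j ^ n * B j| ≤
      (∑ j ∈ Jf \ J, |C j| * |B j|) * lamNegJ ^ n := by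
    rw [Finset.sum_mul]
    refine le_trans (Finset.abs_sum_le_sum_abs _ _) (Finset.sum_le_sum ?_)
    intro j hj
    rw [abs_mul, abs_mul, abs_pow]
    calc |C j| * |lam j| ^ n * |B j| = |C j| * |B j| * |lam j| ^ n := by ring
      _ ≤ |C j| * |B j| * lamNegJ ^ n := by
          refine mul_le_mul_of_nonneg_left (pow_le_pow_left₀ (abs_nonneg _) (hle j hj) n) ?_
          positivity
  have hCS : ∑ j ∈ Jf \ J, |C j| * |B j| ≤
      Real.sqrt (∑ j ∈ Jf \ J, (C j) ^ 2) * Real.sqrt (∑ j ∈ Jf \ J, (B j) ^ 2) := by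
    have := Real.sum_mul_le_sqrt_mul_sqrt (Jf \ J) (fun j => |C j|) (fun j => |B j|)
    simpa [sq_abs] using this
  have hsum_nonneg : (0:ℝ) ≤ ∑ i, π i * f i ^ 2 :=
    Finset.sum_nonneg fun i _ => mul_nonneg (hπpos i).le (sq_nonneg _)
  have hCtot : ∑ j ∈ Jf \ J, (C j) ^ 2 ≤ ∑ i, π i * f i ^ 2 := by
    have hsub : ∑ j ∈ Jf \ J, (C j) ^ 2 ≤ ∑ j, (C j) ^ 2 :=
      Finset.sum_le_sum_of_subset_of_nonneg (Finset.subset_univ _) fun j _ _ => sq_nonneg _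
    refine hsub.trans_eq ?_
    calc ∑ j, (C j) ^ 2 = ∑ j, (∑ k, γ j k * (Real.sqrt (π k) * f k)) ^ 2 :=
          Finset.sum_congr rfl fun j _ => by rw [hCγ]
      _ = ∑ i, (Real.sqrt (π i) * f i) ^ 2 :=
          aux_parseval γ horth (fun k => Real.sqrt (π k) * f k)
      _ = ∑ i, π i * f i ^ 2 := by
          refine Finset.sum_congr rfl fun i _ => ?_
          rw [mul_pow, Real.sq_sqrt (hπpos i).le]
  have hBtot : ∑ j ∈ Jf \ J, (B j) ^ 2 ≤ 1 / πmin := by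
    have hsub : ∑ j ∈ Jf \ J, (B j) ^ 2 ≤ ∑ j, (B j) ^ 2 :=
      Finset.sum_le_sum_of_subset_of_nonneg (Finset.subset_univ _) fun j _ _ => sq_nonneg _
    refine hsub.trans ?_
    have heq : ∑ j, (B j) ^ 2 = ∑ i, (π₀ i - π i) ^ 2 / π i := by
      calc ∑ j, (B j) ^ 2 = ∑ j, (∑ k, γ j k * ((π₀ k - π k) / Real.sqrt (π k))) ^ 2 :=
            Finset.sum_congr rfl fun j _ => by rw [hBγ]
        _ = ∑ i, ((π₀ i - π i) / Real.sqrt (π i)) ^ 2 :=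
            aux_parseval γ horth (fun k => (π₀ k - π k) / Real.sqrt (π k))
        _ = ∑ i, (π₀ i - π i) ^ 2 / π i := by
            refine Finset.sum_congr rfl fun i _ => ?_
            rw [div_pow, Real.sq_sqrt (hπpos i).le]
    rw [heq]
    have hπ₀le1 : ∀ i, π₀ i ≤ 1 := by
      intro i
      calc π₀ i ≤ ∑ k, π₀ k :=
            Finset.single_le_sum (fun k _ => hπ₀pos k) (Finset.mem_univ i)
        _ = 1 := hπ₀sum
    have hstep : ∀ i : Fin d, (π₀ i - π i) ^ 2 / π i = π₀ i ^ 2 / π i - 2 * π₀ i + π i := by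
      intro i
      have h := (hπpos i).ne'
      field_simp
      ring
    have hstep2 : ∀ i ∈ (Finset.univ : Finset (Fin d)), π₀ i ^ 2 / π i ≤ π₀ i / πmin := by
      intro i _
      rw [div_le_div_iff₀ (hπpos i) hπminpos]
      nlinarith [mul_nonneg (mul_nonneg (hπ₀pos i) hπminpos.le) (sub_nonneg.mpr (hπ₀le1 i)), mul_nonneg (hπ₀pos i) (sub_nonneg.mpr (hπminle i))]
    calc ∑ i, (π₀ i - π i) ^ 2 / π i
        = (∑ i, π₀ i ^ 2 / π i) - 2 * (∑ i, π₀ i) + ∑ i, π i := by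
          simp_rw [hstep]
          rw [Finset.sum_add_distrib, Finset.sum_sub_distrib, Finset.mul_sum]
      _ ≤ (∑ i, π₀ i / πmin) - 2 * 1 + 1 := by
          rw [hπ₀sum, hπsum]
          exact add_le_add_left (sub_le_sub_right (Finset.sum_le_sum hstep2) _) _
      _ = 1 / πmin - 1 := by
          rw [← Finset.sum_div, hπ₀sum]; ring
      _ ≤ 1 / πmin := by linarith
  calc |∑ j ∈ Jf \ J, C j * lam j ^ n * B j|
      ≤ (∑ j ∈ Jf \ J, |C j| * |B j|) * lamNegJ ^ n := h1
    _ ≤ (Real.sqrt (∑ i, π i * f i ^ 2) * Real.sqrt (1 / πmin)) * lamNegJ ^ n := by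
        refine mul_le_mul_of_nonneg_right ?_ (pow_nonneg hlamnn n)
        exact hCS.trans (mul_le_mul (Real.sqrt_le_sqrt hCtot) (Real.sqrt_le_sqrt hBtot)
          (Real.sqrt_nonneg _) (Real.sqrt_nonneg _))
    _ = Real.sqrt ((∑ i, π i * f i ^ 2) / πmin) * lamNegJ ^ n := by
        rw [← Real.sqrt_mul hsum_nonneg, mul_one_div]
end

section
/- Fix α ∈ (0,1), r ∈ (0,1), δ > 0, and start the chain from the stationary distribution (π₀ = π). Let N be a positive integer multiple of T_f(δ) with N ≥ 2 · T_f(δ) · log(1/α) / δ². If μ ≤ r − δ, then P( (1/N)·∑_{n=1}^{N} f(X_n) ≥ r + δ ) ≤ α; symmetrically, if μ ≥ r + δ, then P( (1/N)·∑_{n=1}^{N} f(X_n) ≤ r − δ ) ≤ α. (Thus the fixed-sample-size test that outputs H₀ if the empirical mean is at least r+δ and H₁ if it is at most r−δ has error at most α whenever μ ≤ r−δ or μ ≥ r+δ.) -/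
open Finset

section MarkovProofAux
section ChunkOne
variable {d : ℕ}

lemma transMat_pow {P : Matrix (Fin d) (Fin d) ℝ} (hP : IsTransMat P) :
    ∀ n, IsTransMat (P ^ n) := by
  intro n
  induction n with
  | zero =>
    refine ⟨fun i j => ?_, fun i => ?_⟩
    · rw [pow_zero]
      by_cases h : i = j <;> simp [Matrix.one_apply, h]
    · rw [pow_zero]
      simp [Matrix.one_apply]
  | succ n ih =>
    refine ⟨fun i j => ?_, fun i => ?_⟩
    · rw [pow_succ, Matrix.mul_apply]
      exact Finset.sum_nonneg fun k _ => mul_nonneg (ih.1 i k) (hP.1 k j)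
    · have h1 : ∀ j, (P ^ (n+1)) i j = ∑ k, (P ^ n) i k * P k j := by
        intro j; rw [pow_succ, Matrix.mul_apply]
      simp_rw [h1]
      rw [Finset.sum_comm]
      have h2 : ∀ k, ∑ j, (P ^ n) i k * P k j = (P ^ n) i k := by
        intro k; rw [← Finset.mul_sum, hP.2 k, mul_one]
      simp_rw [h2]
      exact ih.2 i

lemma stationary_pow {P : Matrix (Fin d) (Fin d) ℝ} {π : Fin d → ℝ}
    (hπs : ∀ j, ∑ i, π i * P i j = π j) : ∀ n j, ∑ i, π i * (P ^ n) i j = π j := by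
  intro n
  induction n with
  | zero =>
    intro j
    simp [Matrix.one_apply]
  | succ n ih =>
    intro j
    have h1 : ∀ i, π i * (P ^ (n+1)) i j = ∑ k, π i * ((P ^ n) i k * P k j) := by
      intro i; rw [pow_succ, Matrix.mul_apply, Finset.mul_sum]
    simp_rw [h1]
    rw [Finset.sum_comm]
    have h2 : ∀ k, ∑ i, π i * ((P ^ n) i k * P k j) = π k * P k j := by
      intro k
      have : ∀ i, π i * ((P ^ n) i k * P k j) = (π i * (P ^ n) i k) * P k j := fun i => by ring
      simp_rw [this, ← Finset.sum_mul, ih k]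
    simp_rw [h2]
    exact hπs j

lemma pow_pos_add {P : Matrix (Fin d) (Fin d) ℝ} (hP : IsTransMat P) {a b : ℕ} {i k j : Fin d}
    (h1 : 0 < (P ^ a) i k) (h2 : 0 < (P ^ b) k j) : 0 < (P ^ (a + b)) i j := by
  have hT := transMat_pow hP
  rw [pow_add, Matrix.mul_apply]
  have hle : (P ^ a) i k * (P ^ b) k j ≤ ∑ l, (P ^ a) i l * (P ^ b) l j :=
    Finset.single_le_sum (f := fun l => (P ^ a) i l * (P ^ b) l j)
      (fun l _ => mul_nonneg ((hT a).1 i l) ((hT b).1 l j)) (Finset.mem_univ k)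
  exact lt_of_lt_of_le (mul_pos h1 h2) hle

lemma exists_pos_pow {P : Matrix (Fin d) (Fin d) ℝ} (hP : IsTransMat P)
    (hirr : IsIrreducibleMat P) (haper : IsAperiodicMat P) :
    ∃ n₀, 1 ≤ n₀ ∧ ∀ i j, 0 < (P ^ n₀) i j := by
  choose Nf hNf using haper
  choose m hm using hirr
  refine ⟨(∑ i, Nf i) + (∑ i, ∑ j, m i j) + 1, by omega, fun i j => ?_⟩
  have h1 : m i j ≤ ∑ i, ∑ j, m i j := by
    calc m i j ≤ ∑ j, m i j :=
          Finset.single_le_sum (fun _ _ => Nat.zero_le _) (Finset.mem_univ j)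
      _ ≤ ∑ i, ∑ j, m i j :=
          Finset.single_le_sum (f := fun i => ∑ j, m i j)
            (fun _ _ => Nat.zero_le _) (Finset.mem_univ i)
  have h2 : Nf i ≤ ∑ i, Nf i :=
    Finset.single_le_sum (fun _ _ => Nat.zero_le _) (Finset.mem_univ i)
  have hsplit : (∑ i, Nf i) + (∑ i, ∑ j, m i j) + 1
      = ((∑ i, Nf i) + (∑ i, ∑ j, m i j) + 1 - m i j) + m i j := by omega
  rw [hsplit]
  exact pow_pos_add hP (hNf i _ (by omega)) (hm i j)

end ChunkOne
section ChunkTwo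
variable {d : ℕ}

lemma doeblin_contraction {Q : Matrix (Fin d) (Fin d) ℝ} (hQ : IsTransMat Q)
    {π : Fin d → ℝ} (hπ1 : ∑ i, π i = 1) (hπs : ∀ j, ∑ i, π i * Q i j = π j)
    {ε : ℝ} (hε : ∀ i j, ε ≤ Q i j)
    {p : Fin d → ℝ} (hp1 : ∑ i, p i = 1) :
    ∑ j, |(∑ i, p i * Q i j) - π j| ≤ (1 - d * ε) * ∑ i, |p i - π i| := by
  have key : ∀ j, |(∑ i, p i * Q i j) - π j| ≤ ∑ i, |p i - π i| * (Q i j - ε) := by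
    intro j
    have e1 : (∑ i, p i * Q i j) - π j = ∑ i, (p i - π i) * (Q i j - ε) := by
      have expand : ∀ i, (p i - π i) * (Q i j - ε)
          = (p i * Q i j - π i * Q i j) - (p i * ε - π i * ε) := fun i => by ring
      rw [Finset.sum_congr rfl (fun i _ => expand i), Finset.sum_sub_distrib,
        Finset.sum_sub_distrib, Finset.sum_sub_distrib, hπs j,
        ← Finset.sum_mul, ← Finset.sum_mul, hp1, hπ1]
      ring
    rw [e1]
    refine (Finset.abs_sum_le_sum_abs _ _).trans ?_
    refine Finset.sum_le_sum fun i _ => ?_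
    rw [abs_mul]
    have h1 : |Q i j - ε| = Q i j - ε := abs_of_nonneg (by linarith [hε i j])
    rw [h1]
  calc ∑ j, |(∑ i, p i * Q i j) - π j|
      ≤ ∑ j, ∑ i, |p i - π i| * (Q i j - ε) := Finset.sum_le_sum fun j _ => key j
    _ = ∑ i, |p i - π i| * ((∑ j, Q i j) - d * ε) := by
        rw [Finset.sum_comm]
        refine Finset.sum_congr rfl fun i _ => ?_
        rw [← Finset.mul_sum, Finset.sum_sub_distrib, Finset.sum_const, Finset.card_univ,
          Fintype.card_fin, nsmul_eq_mul]
    _ = (1 - d * ε) * ∑ i, |p i - π i| := by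
        rw [Finset.mul_sum]
        refine Finset.sum_congr rfl fun i _ => ?_
        rw [hQ.2 i]
        ring

lemma rows_close {Q : Matrix (Fin d) (Fin d) ℝ} (hd : 0 < d) (hQ : IsTransMat Q)
    {π : Fin d → ℝ} (hπ0 : ∀ i, 0 ≤ π i) (hπ1 : ∑ i, π i = 1)
    (hπs : ∀ j, ∑ i, π i * Q i j = π j)
    {ε : ℝ} (hε0 : 0 ≤ ε) (hε : ∀ i j, ε ≤ Q i j) :
    ∀ k i, ∑ j, |(Q ^ k) i j - π j| ≤ 2 * (1 - d * ε) ^ k := by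
  have : Nonempty (Fin d) := Fin.pos_iff_nonempty.mp hd
  obtain ⟨i0⟩ := this
  have hθ0 : 0 ≤ 1 - (d : ℝ) * ε := by
    have h1 : ∑ _j : Fin d, ε ≤ ∑ j, Q i0 j := Finset.sum_le_sum fun j _ => hε i0 j
    rw [hQ.2 i0, Finset.sum_const, Finset.card_univ, Fintype.card_fin, nsmul_eq_mul] at h1
    linarith
  intro k
  induction k with
  | zero =>
    intro i
    have h1 : ∑ j, |(Q ^ 0) i j - π j| ≤ ∑ j, ((Q ^ 0) i j + π j) := by
      refine Finset.sum_le_sum fun j _ => ?_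
      have := abs_sub ((Q ^ 0) i j) (π j)
      calc |(Q ^ 0) i j - π j| ≤ |(Q ^ 0) i j| + |π j| := abs_sub _ _
        _ = (Q ^ 0) i j + π j := by
            rw [abs_of_nonneg ((transMat_pow hQ 0).1 i j), abs_of_nonneg (hπ0 j)]
    rw [Finset.sum_add_distrib, (transMat_pow hQ 0).2 i, hπ1] at h1
    norm_num at h1
    convert h1 using 2
    all_goals norm_num
  | succ k ih =>
    intro i
    have hrow : ∀ j, (Q ^ (k+1)) i j = ∑ l, (Q ^ k) i l * Q l j := fun j => by
      rw [pow_succ, Matrix.mul_apply]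
    calc ∑ j, |(Q ^ (k+1)) i j - π j|
        = ∑ j, |(∑ l, (Q ^ k) i l * Q l j) - π j| := by simp_rw [hrow]
      _ ≤ (1 - d * ε) * ∑ l, |(Q ^ k) i l - π l| :=
          doeblin_contraction hQ hπ1 hπs hε ((transMat_pow hQ k).2 i)
      _ ≤ (1 - d * ε) * (2 * (1 - d * ε) ^ k) :=
          mul_le_mul_of_nonneg_left (ih i) hθ0
      _ = 2 * (1 - d * ε) ^ (k + 1) := by ring

lemma mixSet_nonempty {P : Matrix (Fin d) (Fin d) ℝ} (hd : 0 < d) (hP : IsTransMat P)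
    (hirr : IsIrreducibleMat P) (haper : IsAperiodicMat P)
    {π : Fin d → ℝ} (hπ0 : ∀ i, 0 ≤ π i) (hπ1 : ∑ i, π i = 1)
    (hπs : ∀ j, ∑ i, π i * P i j = π j)
    {f : Fin d → ℝ} (hf : ∀ i, f i ∈ Set.Icc (0:ℝ) 1) {δ : ℝ} (hδ : 0 < δ) :
    {n : ℕ | 1 ≤ n ∧ ∀ i, fDisc f (fun j => (P ^ n) i j) π ≤ δ}.Nonempty := by
  obtain ⟨n₀, hn₀1, hn₀pos⟩ := exists_pos_pow hP hirr haper
  set Q := P ^ n₀ with hQdef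
  have hQ : IsTransMat Q := transMat_pow hP n₀
  have : Nonempty (Fin d) := Fin.pos_iff_nonempty.mp hd
  have hne : (Finset.univ.image fun q : Fin d × Fin d => Q q.1 q.2).Nonempty :=
    (Finset.univ_nonempty).image _
  set ε := Finset.min' _ hne with hεdef
  have hεpos : 0 < ε := by
    obtain ⟨v, _, hveq⟩ := Finset.mem_image.mp (Finset.min'_mem _ hne)
    rw [hεdef, ← hveq]
    exact hn₀pos v.1 v.2
  have hεle : ∀ i j, ε ≤ Q i j := fun i j =>
    Finset.min'_le _ _ (Finset.mem_image.mpr ⟨(i, j), Finset.mem_univ _, rfl⟩)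
  have hπsQ : ∀ j, ∑ i, π i * Q i j = π j := stationary_pow hπs n₀
  have hθ1 : 1 - (d : ℝ) * ε < 1 := by
    have h0 : (0:ℝ) < d * ε := mul_pos (by exact_mod_cast hd) hεpos
    linarith
  have hθ0 : 0 ≤ 1 - (d : ℝ) * ε := by
    obtain ⟨i0⟩ := ‹Nonempty (Fin d)›
    have h1 : ∑ _j : Fin d, ε ≤ ∑ j, Q i0 j := Finset.sum_le_sum fun j _ => hεle i0 j
    rw [hQ.2 i0, Finset.sum_const, Finset.card_univ, Fintype.card_fin, nsmul_eq_mul] at h1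
    linarith
  obtain ⟨k, hk⟩ := exists_pow_lt_of_lt_one (half_pos hδ) hθ1
  refine ⟨n₀ * (k + 1), Nat.one_le_iff_ne_zero.mpr (by positivity), fun i => ?_⟩
  have hclose := rows_close hd hQ hπ0 hπ1 hπsQ (le_of_lt hεpos) hεle (k + 1) i
  have hmono : (1 - (d:ℝ) * ε) ^ (k + 1) ≤ (1 - (d:ℝ) * ε) ^ k :=
    pow_le_pow_of_le_one hθ0 (le_of_lt hθ1) (Nat.le_succ k)
  have hfd : fDisc f (fun j => (P ^ (n₀ * (k+1))) i j) π
      = |∑ j, (Q ^ (k+1)) i j * f j - ∑ j, π j * f j| := by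
    rw [fDisc, pow_mul]
  rw [hfd]
  have e1 : ∑ j, (Q ^ (k+1)) i j * f j - ∑ j, π j * f j
      = ∑ j, ((Q ^ (k+1)) i j - π j) * f j := by
    rw [← Finset.sum_sub_distrib]
    exact Finset.sum_congr rfl fun j _ => by ring
  rw [e1]
  calc |∑ j, ((Q ^ (k+1)) i j - π j) * f j|
      ≤ ∑ j, |((Q ^ (k+1)) i j - π j) * f j| := Finset.abs_sum_le_sum_abs _ _
    _ ≤ ∑ j, |(Q ^ (k+1)) i j - π j| := by
        refine Finset.sum_le_sum fun j _ => ?_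
        rw [abs_mul]
        have : |f j| ≤ 1 := abs_le.mpr ⟨by linarith [(hf j).1], (hf j).2⟩
        calc |(Q ^ (k+1)) i j - π j| * |f j| ≤ |(Q ^ (k+1)) i j - π j| * 1 :=
              mul_le_mul_of_nonneg_left this (abs_nonneg _)
          _ = |(Q ^ (k+1)) i j - π j| := mul_one _
    _ ≤ 2 * (1 - d * ε) ^ (k + 1) := hclose
    _ ≤ 2 * (1 - d * ε) ^ k := by linarith
    _ ≤ δ := by linarith

end ChunkTwo
section ChunkThree
variable {d : ℕ}

lemma quad_le_exp {u : ℝ} (hu : 0 ≤ u) : 1 + u + u^2/2 ≤ Real.exp u := by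
  have h := Real.sum_le_exp_of_nonneg hu 3
  simp [Finset.sum_range_succ] at h
  nlinarith [h]

lemma exp_cubic_bound {x : ℝ} (hx0 : 0 ≤ x) (hx1 : x ≤ 1) :
    Real.exp x ≤ 1 + x + x^2/2 + (2/9) * x^3 := by
  have hb := Real.exp_bound' hx0 hx1 (n := 3) (by norm_num)
  have : (∑ m ∈ Finset.range 3, x ^ m / m.factorial) = 1 + x + x^2/2 := by
    norm_num [Finset.sum_range_succ]
    try ring
  rw [this] at hb
  norm_num [Nat.factorial] at hb
  nlinarith [hb, pow_nonneg hx0 3]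

lemma hoeff_lite {p f : Fin d → ℝ} (hp0 : ∀ i, 0 ≤ p i) (hp1 : ∑ i, p i = 1)
    (hf : ∀ i, 0 ≤ f i ∧ f i ≤ 1) {s ν : ℝ} (hs0 : 0 ≤ s) (hs1 : s ≤ 1)
    (hν : ∑ i, p i * f i ≤ ν) :
    ∑ i, p i * Real.exp (s * f i) ≤ Real.exp (s * ν + s^2/2) := by
  set m := ∑ i, p i * f i with hmdef
  have hm0 : 0 ≤ m := Finset.sum_nonneg fun i _ => mul_nonneg (hp0 i) (hf i).1
  have hm1 : m ≤ 1 := by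
    calc m ≤ ∑ i, p i * 1 :=
          Finset.sum_le_sum fun i _ => mul_le_mul_of_nonneg_left (hf i).2 (hp0 i)
      _ = 1 := by simp only [mul_one]; exact hp1
  have hpt : ∀ i, Real.exp (s * f i) ≤ 1 + (s + s^2/2 + (2/9) * s^3) * f i := by
    intro i
    obtain ⟨hf0, hf1⟩ := hf i
    have hx0 : 0 ≤ s * f i := mul_nonneg hs0 hf0
    have hx1 : s * f i ≤ 1 := by nlinarith
    have hb := exp_cubic_bound hx0 hx1
    have hff : f i ^ 2 ≤ f i := by nlinarith
    have hfff : f i ^ 3 ≤ f i := by nlinarith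
    have e2 : (s * f i)^2 ≤ s^2 * f i := by
      have : (s * f i)^2 = s^2 * f i ^2 := by ring
      rw [this]
      exact mul_le_mul_of_nonneg_left hff (by positivity)
    have e3 : (s * f i)^3 ≤ s^3 * f i := by
      have : (s * f i)^3 = s^3 * f i ^3 := by ring
      rw [this]
      exact mul_le_mul_of_nonneg_left hfff (by positivity)
    nlinarith [pow_nonneg hs0 3]
  have hsum : ∑ i, p i * Real.exp (s * f i) ≤ 1 + (s + s^2/2 + (2/9) * s^3) * m := by
    calc ∑ i, p i * Real.exp (s * f i)
        ≤ ∑ i, p i * (1 + (s + s^2/2 + (2/9) * s^3) * f i) :=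
          Finset.sum_le_sum fun i _ => mul_le_mul_of_nonneg_left (hpt i) (hp0 i)
      _ = ∑ i, (p i + (s + s^2/2 + (2/9) * s^3) * (p i * f i)) :=
          Finset.sum_congr rfl fun i _ => by ring
      _ = 1 + (s + s^2/2 + (2/9) * s^3) * m := by
          rw [Finset.sum_add_distrib, hp1, ← Finset.mul_sum]
  have hu0 : 0 ≤ s * m + s^2/2 := by positivity
  have hexp := quad_le_exp hu0
  have key : 1 + (s + s^2/2 + (2/9) * s^3) * m ≤ Real.exp (s * m + s^2/2) := by
    nlinarith [sq_nonneg (1 - m), sq_nonneg s, sq_nonneg (s*(1-m)), pow_nonneg hs0 3,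
      pow_nonneg hs0 4, mul_nonneg (pow_nonneg hs0 3) hm0, mul_nonneg hs0 hm0]
  have hmono : Real.exp (s * m + s^2/2) ≤ Real.exp (s * ν + s^2/2) := by
    apply Real.exp_le_exp.mpr
    have : s * m ≤ s * ν := mul_le_mul_of_nonneg_left hν hs0
    linarith
  linarith

lemma amgm_pow {T : ℕ} (hT : 0 < T) (a : ℕ → ℝ) (ha : ∀ j ∈ Finset.range T, 0 ≤ a j) :
    ∏ j ∈ Finset.range T, a j ≤ (1/(T:ℝ)) * ∑ j ∈ Finset.range T, a j ^ T := by
  have hTR : (0:ℝ) < T := by exact_mod_cast hT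
  have h := Real.geom_mean_le_arith_mean_weighted (Finset.range T)
    (fun _ => 1/(T:ℝ)) (fun j => a j ^ T)
    (fun i _ => by positivity)
    (by rw [Finset.sum_const, Finset.card_range, nsmul_eq_mul]; field_simp)
    (fun j hj => pow_nonneg (ha j hj) T)
  calc ∏ j ∈ Finset.range T, a j
      = ∏ j ∈ Finset.range T, (a j ^ T) ^ (1/(T:ℝ)) := by
        refine Finset.prod_congr rfl fun j hj => ?_
        rw [← Real.rpow_natCast (a j) T, ← Real.rpow_mul (ha j hj), mul_one_div,
          div_self (ne_of_gt hTR), Real.rpow_one]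
    _ ≤ ∑ j ∈ Finset.range T, (1/(T:ℝ)) * a j ^ T := h
    _ = (1/(T:ℝ)) * ∑ j ∈ Finset.range T, a j ^ T := (Finset.mul_sum _ _ _).symm

end ChunkThree
section ChunkFour
variable {d : ℕ}

noncomputable def evol (P : Matrix (Fin d) (Fin d) ℝ) (g : ℕ → Fin d → ℝ)
    (p : Fin d → ℝ) : ℕ → Fin d → ℝ
  | 0 => p
  | n+1 => fun j => (∑ i, evol P g p n i * P i j) * g (n+1) j

lemma evol_succ (P : Matrix (Fin d) (Fin d) ℝ) (g : ℕ → Fin d → ℝ) (p : Fin d → ℝ)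
    (n : ℕ) (j : Fin d) :
    evol P g p (n+1) j = (∑ i, evol P g p n i * P i j) * g (n+1) j := rfl

def snocEquiv (d M : ℕ) : ((Fin M → Fin d) × Fin d) ≃ (Fin (M+1) → Fin d) where
  toFun yj := Fin.snoc yj.1 yj.2
  invFun x := (Fin.init x, x (Fin.last M))
  left_inv := by rintro ⟨y, j⟩; simp
  right_inv := fun x => Fin.snoc_init_self x

lemma sum_snoc {M : ℕ} (F : (Fin (M+1) → Fin d) → ℝ) :
    ∑ x : Fin (M+1) → Fin d, F x = ∑ y : Fin M → Fin d, ∑ j, F (Fin.snoc y j) := by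
  calc ∑ x : Fin (M+1) → Fin d, F x
      = ∑ yj : (Fin M → Fin d) × Fin d, F (Fin.snoc yj.1 yj.2) :=
        (Fintype.sum_equiv (snocEquiv d M) _ F fun yj => rfl).symm
    _ = ∑ y : Fin M → Fin d, ∑ j, F (Fin.snoc y j) := Fintype.sum_prod_type _

lemma pathMass_nonneg {P : Matrix (Fin d) (Fin d) ℝ} (hP : IsTransMat P)
    {p : Fin d → ℝ} (hp : ∀ i, 0 ≤ p i) {N : ℕ} (x : Fin (N+1) → Fin d) :
    0 ≤ pathMass P p N x :=
  mul_nonneg (hp _) (Finset.prod_nonneg fun n _ => hP.1 _ _)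

lemma snoc_zero' {M : ℕ} (y : Fin (M+1) → Fin d) (j : Fin d) :
    (Fin.snoc y j : Fin (M+2) → Fin d) 0 = y 0 := by
  rw [show ((0 : Fin (M+2))) = (0 : Fin (M+1)).castSucc from (Fin.castSucc_zero).symm,
    Fin.snoc_castSucc]

lemma pathMass_snoc (P : Matrix (Fin d) (Fin d) ℝ) (p : Fin d → ℝ) {M : ℕ}
    (y : Fin (M+1) → Fin d) (j : Fin d) :
    pathMass P p (M+1) (Fin.snoc y j) = pathMass P p M y * P (y (Fin.last M)) j := by
  unfold pathMass
  rw [Fin.prod_univ_castSucc]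
  simp only [Fin.succ_castSucc, Fin.snoc_castSucc, Fin.succ_last, Fin.snoc_last,
    snoc_zero']
  ring

lemma prodg_snoc (g : ℕ → Fin d → ℝ) {M : ℕ} (y : Fin (M+1) → Fin d) (j : Fin d) :
    (∏ n : Fin (M+1), g ((n : ℕ)+1) ((Fin.snoc y j : Fin (M+2) → Fin d) n.succ))
    = (∏ n : Fin M, g ((n : ℕ)+1) (y n.succ)) * g (M+1) j := by
  rw [Fin.prod_univ_castSucc]
  simp only [Fin.succ_castSucc, Fin.snoc_castSucc, Fin.succ_last, Fin.snoc_last,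
    Fin.coe_castSucc, Fin.val_last]

lemma path_sum (P : Matrix (Fin d) (Fin d) ℝ) (g : ℕ → Fin d → ℝ) (p : Fin d → ℝ) :
    ∀ (N : ℕ) (h : Fin d → ℝ),
    ∑ x : Fin (N+1) → Fin d,
      pathMass P p N x * ((∏ n : Fin N, g ((n : ℕ)+1) (x n.succ)) * h (x (Fin.last N)))
    = ∑ j, evol P g p N j * h j := by
  intro N
  induction N with
  | zero =>
    intro h
    have : ∀ x : Fin 1 → Fin d,
        pathMass P p 0 x * ((∏ n : Fin 0, g ((n : ℕ)+1) (x n.succ)) * h (x (Fin.last 0)))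
        = p (x 0) * h (x 0) := by
      intro x
      simp [pathMass, Fin.last]
    rw [Finset.sum_congr rfl fun x _ => this x]
    exact Fintype.sum_equiv (Equiv.funUnique (Fin 1) (Fin d)) _ (fun j => p j * h j)
      (fun x => rfl)
  | succ N ih =>
    intro h
    rw [sum_snoc]
    have step : ∀ (y : Fin (N+1) → Fin d),
        (∑ j, pathMass P p (N+1) (Fin.snoc y j) *
          ((∏ n : Fin (N+1), g ((n : ℕ)+1) ((Fin.snoc y j : Fin (N+2) → Fin d) n.succ)) *
            h ((Fin.snoc y j : Fin (N+2) → Fin d) (Fin.last (N+1)))))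
        = pathMass P p N y * ((∏ n : Fin N, g ((n : ℕ)+1) (y n.succ)) *
            (fun i => ∑ j, P i j * (g (N+1) j * h j)) (y (Fin.last N))) := by
      intro y
      simp only [pathMass_snoc, prodg_snoc, Fin.snoc_last]
      rw [Finset.mul_sum, Finset.mul_sum]
      refine Finset.sum_congr rfl fun j _ => ?_
      ring
    rw [Finset.sum_congr rfl fun y _ => step y,
      ih (fun i => ∑ j, P i j * (g (N+1) j * h j))]
    calc ∑ i, evol P g p N i * ∑ j, P i j * (g (N+1) j * h j)
        = ∑ i, ∑ j, evol P g p N i * (P i j * (g (N+1) j * h j)) :=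
          Finset.sum_congr rfl fun i _ => Finset.mul_sum _ _ _
      _ = ∑ j, ∑ i, evol P g p N i * (P i j * (g (N+1) j * h j)) := Finset.sum_comm
      _ = ∑ j, (∑ i, evol P g p N i * P i j) * (g (N+1) j * h j) := by
          refine Finset.sum_congr rfl fun j _ => ?_
          rw [Finset.sum_mul]
          exact Finset.sum_congr rfl fun i _ => by ring
      _ = ∑ j, evol P g p (N+1) j * h j := by
          refine Finset.sum_congr rfl fun j _ => ?_
          rw [evol_succ]
          ring

end ChunkFour
section ChunkFive
variable {d : ℕ}

lemma mod_ne_helper {T j₀ t : ℕ} (hj : j₀ < T) (ht1 : 1 ≤ t) (ht2 : t < T) :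
    (j₀ + t) % T ≠ j₀ := by
  rcases lt_or_ge (j₀ + t) T with h | h
  · rw [Nat.mod_eq_of_lt h]; omega
  · have h2 : j₀ + t - T < T := by omega
    rw [Nat.mod_eq_sub_mod h, Nat.mod_eq_of_lt h2]
    omega

lemma evol_nonneg {P : Matrix (Fin d) (Fin d) ℝ} (hP : IsTransMat P)
    {g : ℕ → Fin d → ℝ} (hg : ∀ c i, 0 ≤ g c i)
    {p : Fin d → ℝ} (hp : ∀ i, 0 ≤ p i) : ∀ c i, 0 ≤ evol P g p c i := by
  intro c
  induction c with
  | zero => exact hp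
  | succ c ih =>
    intro j
    rw [evol_succ]
    exact mul_nonneg (Finset.sum_nonneg fun i _ => mul_nonneg (ih i) (hP.1 i j)) (hg _ j)

lemma evol_plain_sum {P : Matrix (Fin d) (Fin d) ℝ} (hP : IsTransMat P)
    {g : ℕ → Fin d → ℝ} {p : Fin d → ℝ} {c : ℕ} (hg1 : ∀ i, g (c+1) i = 1) :
    ∑ j, evol P g p (c+1) j = ∑ j, evol P g p c j := by
  have h1 : ∀ j, evol P g p (c+1) j = ∑ i, evol P g p c i * P i j := by
    intro j; rw [evol_succ, hg1 j, mul_one]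
  simp_rw [h1]
  rw [Finset.sum_comm]
  exact Finset.sum_congr rfl fun i _ => by rw [← Finset.mul_sum, hP.2 i, mul_one]

lemma evol_pow {P : Matrix (Fin d) (Fin d) ℝ} (hP : IsTransMat P)
    {g : ℕ → Fin d → ℝ} {p : Fin d → ℝ} {c u : ℕ}
    (hg : ∀ t, 1 ≤ t → t ≤ u → ∀ i, g (c+t) i = 1) :
    ∀ t, t ≤ u → ∀ j, evol P g p (c+t) j = ∑ i, evol P g p c i * (P ^ t) i j := by
  intro t
  induction t with
  | zero =>
    intro _ j
    simp [Matrix.one_apply]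
  | succ t ih =>
    intro ht j
    have htu : t ≤ u := by omega
    have : c + (t + 1) = (c + t) + 1 := by omega
    have hgg : g (c + t + 1) j = 1 := by
      have h := hg (t+1) (by omega) ht j
      rwa [show c + (t+1) = c + t + 1 by omega] at h
    rw [this, evol_succ, hgg, mul_one]
    have h2 : ∀ i, evol P g p (c+t) i = ∑ l, evol P g p c l * (P ^ t) l i :=
      fun i => ih htu i
    simp_rw [h2, Finset.sum_mul]
    rw [Finset.sum_comm]
    refine Finset.sum_congr rfl fun l _ => ?_
    rw [pow_succ, Matrix.mul_apply, Finset.mul_sum]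
    exact Finset.sum_congr rfl fun i _ => by ring

end ChunkFive
section ChunkSix
variable {d : ℕ}

noncomputable def gfun (T j₀ : ℕ) (s : ℝ) (f : Fin d → ℝ) : ℕ → Fin d → ℝ :=
  fun c i => if ((c-1) % T = j₀ ∧ 1 ≤ c) then Real.exp (s * f i) else 1

lemma gfun_nonneg (T j₀ : ℕ) (s : ℝ) (f : Fin d → ℝ) (c : ℕ) (i : Fin d) :
    0 ≤ gfun T j₀ s f c i := by
  unfold gfun
  split
  · positivity
  · norm_num

lemma block_step {P : Matrix (Fin d) (Fin d) ℝ} (hP : IsTransMat P)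
    {f : Fin d → ℝ} (hf : ∀ i, 0 ≤ f i ∧ f i ≤ 1)
    {s ν : ℝ} (hs0 : 0 ≤ s) (hs1 : s ≤ 1)
    {T : ℕ} (hT1 : 1 ≤ T)
    (hrow : ∀ i, ∑ j, (P ^ T) i j * f j ≤ ν)
    {g : ℕ → Fin d → ℝ} {p : Fin d → ℝ} {c : ℕ}
    (hnn : ∀ i, 0 ≤ evol P g p c i)
    (hplain : ∀ t, 1 ≤ t → t ≤ T-1 → ∀ i, g (c+t) i = 1)
    (hmark : ∀ i, g (c+T) i = Real.exp (s * f i)) :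
    ∑ j, evol P g p (c+T) j ≤ Real.exp (s * ν + s^2/2) * ∑ j, evol P g p c j := by
  have hTsplit : c + T = (c + (T-1)) + 1 := by omega
  have hT' : T - 1 + 1 = T := by omega
  have hev : ∀ i, evol P g p (c+(T-1)) i = ∑ l, evol P g p c l * (P ^ (T-1)) l i :=
    fun i => evol_pow hP hplain (T-1) le_rfl i
  have hfull : ∀ j, evol P g p (c+T) j
      = ∑ l, evol P g p c l * ((P ^ T) l j * Real.exp (s * f j)) := by
    intro j
    rw [hTsplit, evol_succ]
    have hgm : g (c + (T-1) + 1) j = Real.exp (s * f j) := by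
      rw [← hTsplit]; exact hmark j
    rw [hgm]
    simp_rw [hev, Finset.sum_mul]
    rw [Finset.sum_comm]
    refine Finset.sum_congr rfl fun l _ => ?_
    have hTe : (P ^ T) l j = ∑ i, (P ^ (T-1)) l i * P i j := by
      conv_lhs => rw [← hT']
      rw [pow_succ, Matrix.mul_apply]
    rw [hTe, Finset.sum_mul, Finset.mul_sum]
    exact Finset.sum_congr rfl fun i _ => by ring
  calc ∑ j, evol P g p (c+T) j
      = ∑ l, evol P g p c l * (∑ j, (P ^ T) l j * Real.exp (s * f j)) := by
        simp_rw [hfull]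
        rw [Finset.sum_comm]
        exact Finset.sum_congr rfl fun l _ => by rw [Finset.mul_sum]
    _ ≤ ∑ l, evol P g p c l * Real.exp (s * ν + s^2/2) := by
        refine Finset.sum_le_sum fun l _ => ?_
        refine mul_le_mul_of_nonneg_left ?_ (hnn l)
        exact hoeff_lite ((transMat_pow hP T).1 l) ((transMat_pow hP T).2 l) hf hs0 hs1 (hrow l)
    _ = Real.exp (s * ν + s^2/2) * ∑ j, evol P g p c j := by
        rw [← Finset.sum_mul, mul_comm]

lemma evol_gfun_bound {P : Matrix (Fin d) (Fin d) ℝ} (hP : IsTransMat P)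
    {π f : Fin d → ℝ}
    (hπ0 : ∀ i, 0 ≤ π i) (hπ1 : ∑ i, π i = 1) (hπs : ∀ j, ∑ i, π i * P i j = π j)
    (hf : ∀ i, 0 ≤ f i ∧ f i ≤ 1)
    {s ν : ℝ} (hs0 : 0 ≤ s) (hs1 : s ≤ 1)
    (hπf : ∑ i, π i * f i ≤ ν)
    {T : ℕ} (hT1 : 1 ≤ T)
    (hrow : ∀ i, ∑ j, (P ^ T) i j * f j ≤ ν)
    {j₀ : ℕ} (hj₀ : j₀ < T) (m' : ℕ) :
    ∑ j, evol P (gfun T j₀ s f) π (T * (m'+1)) j ≤ Real.exp (s * ν + s^2/2) ^ (m'+1) := by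
  set B := Real.exp (s * ν + s^2/2) with hBdef
  set G := gfun T j₀ s f with hGdef
  have hGnn : ∀ c i, 0 ≤ G c i := gfun_nonneg T j₀ s f
  -- initial segment: evol stays π up to time j₀
  have hinit : ∀ c, c ≤ j₀ → evol P G π c = π := by
    intro c
    induction c with
    | zero => intro _; rfl
    | succ c ih =>
      intro hc
      funext j
      rw [evol_succ, ih (by omega)]
      have hGc : G (c+1) j = 1 := by
        rw [hGdef]
        unfold gfun
        rw [if_neg]
        rintro ⟨h1, _⟩
        rw [Nat.add_sub_cancel, Nat.mod_eq_of_lt (by omega)] at h1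
        omega
      rw [hπs j, hGc, mul_one]
  -- first mark
  have hfirst : ∑ j, evol P G π (j₀+1) j ≤ B := by
    have he : ∀ j, evol P G π (j₀+1) j = π j * Real.exp (s * f j) := by
      intro j
      rw [evol_succ, hinit j₀ le_rfl, hπs j]
      have hGc : G (j₀+1) j = Real.exp (s * f j) := by
        rw [hGdef]
        unfold gfun
        rw [if_pos]
        exact ⟨by rw [Nat.add_sub_cancel, Nat.mod_eq_of_lt hj₀], by omega⟩
      rw [hGc]
    simp_rw [he]
    exact hoeff_lite hπ0 hπ1 hf hs0 hs1 hπf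
  -- blocks
  have hblock : ∀ k, ∑ j, evol P G π (j₀+1+k*T) j ≤ B^(k+1) := by
    intro k
    induction k with
    | zero => simpa using hfirst
    | succ k ih =>
      have harith : j₀+1+(k+1)*T = (j₀+1+k*T) + T := by ring
      rw [harith]
      have hplain : ∀ t, 1 ≤ t → t ≤ T-1 → ∀ i, G (j₀+1+k*T+t) i = 1 := by
        intro t ht1 ht2 i
        have e : j₀+1+k*T+t = (j₀+t+k*T) + 1 := by ring
        rw [hGdef]
        unfold gfun
        rw [if_neg]
        rintro ⟨h1, _⟩
        rw [e, Nat.add_sub_cancel, Nat.add_mul_mod_self_right] at h1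
        exact mod_ne_helper hj₀ ht1 (by omega) h1
      have hmark : ∀ i, G (j₀+1+k*T+T) i = Real.exp (s * f i) := by
        intro i
        have e : j₀+1+k*T+T = (j₀+(k+1)*T) + 1 := by ring
        rw [hGdef]
        unfold gfun
        rw [if_pos]
        refine ⟨?_, by omega⟩
        rw [e, Nat.add_sub_cancel, Nat.add_mul_mod_self_right, Nat.mod_eq_of_lt hj₀]
      have hstep := block_step hP hf hs0 hs1 hT1 hrow
        (fun i => evol_nonneg hP hGnn hπ0 (j₀+1+k*T) i) hplain hmark
      calc ∑ j, evol P G π (j₀+1+k*T+T) j ≤ B * ∑ j, evol P G π (j₀+1+k*T) j := hstep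
        _ ≤ B * B^(k+1) := mul_le_mul_of_nonneg_left ih (Real.exp_pos _).le
        _ = B^(k+2) := by ring
  -- tail
  have htail : ∀ u, u ≤ T-1-j₀ →
      ∑ j, evol P G π (j₀+1+m'*T+u) j = ∑ j, evol P G π (j₀+1+m'*T) j := by
    intro u
    induction u with
    | zero => intro _; rfl
    | succ u ih =>
      intro hu
      have e0 : j₀+1+m'*T+(u+1) = (j₀+1+m'*T+u)+1 := by ring
      rw [e0, evol_plain_sum hP, ih (by omega)]
      intro i
      have e : j₀+1+m'*T+u+1 = (j₀+(u+1)+m'*T) + 1 := by ring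
      rw [hGdef]
      unfold gfun
      rw [if_neg]
      rintro ⟨h1, _⟩
      rw [e, Nat.add_sub_cancel, Nat.add_mul_mod_self_right,
        Nat.mod_eq_of_lt (by omega : j₀+(u+1) < T)] at h1
      omega
  have hNe : j₀+1+m'*T+(T-1-j₀) = T*(m'+1) := by
    have hu : j₀ + 1 + (T-1-j₀) = T := by omega
    calc j₀+1+m'*T+(T-1-j₀) = (j₀+1+(T-1-j₀)) + m'*T := by ring
      _ = T + m'*T := by rw [hu]
      _ = T*(m'+1) := by ring
  calc ∑ j, evol P G π (T*(m'+1)) j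
      = ∑ j, evol P G π (j₀+1+m'*T+(T-1-j₀)) j := by rw [hNe]
    _ = ∑ j, evol P G π (j₀+1+m'*T) j := htail _ le_rfl
    _ ≤ B^(m'+1) := hblock m'

end ChunkSix
section ChunkSeven
variable {d : ℕ}

lemma master {P : Matrix (Fin d) (Fin d) ℝ} {π f : Fin d → ℝ}
    (hP : IsTransMat P)
    (hπ0 : ∀ i, 0 ≤ π i) (hπ1 : ∑ i, π i = 1) (hπs : ∀ j, ∑ i, π i * P i j = π j)
    (hf : ∀ i, 0 ≤ f i ∧ f i ≤ 1)
    {T N : ℕ} (hT1 : 1 ≤ T) (hN : 0 < N) (hdvd : T ∣ N)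
    {ν θ s : ℝ} (hs0 : 0 < s) (hs1 : s ≤ 1)
    (hπf : ∑ i, π i * f i ≤ ν)
    (hrow : ∀ i, ∑ j, (P ^ T) i j * f j ≤ ν)
    (hgap : ν + s ≤ θ) :
    pathProb P π N (fun x => θ ≤ (1 / (N:ℝ)) * ∑ n : Fin N, f (x n.succ))
      ≤ Real.exp (-(N:ℝ) * s^2 / (2*T)) := by
  classical
  obtain ⟨m', hm'⟩ : ∃ m', N = T * (m' + 1) := by
    obtain ⟨m, hm⟩ := hdvd
    have hm0 : m ≠ 0 := by
      rintro rfl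
      rw [hm] at hN
      simp at hN
    refine ⟨m - 1, ?_⟩
    rw [hm]
    congr 1
    omega
  have hT0R : (0:ℝ) < (T:ℝ) := by exact_mod_cast hT1
  have hN0R : (0:ℝ) < (N:ℝ) := by exact_mod_cast hN
  set B := Real.exp (s * ν + s^2/2) with hBdef
  set t := s / (T:ℝ) with htdef
  have ht0 : 0 < t := div_pos hs0 hT0R
  -- notation for the fiber sums
  set Z : ℕ → (Fin (N+1) → Fin d) → ℝ :=
    fun j₀ x => ∑ n ∈ Finset.univ.filter (fun n : Fin N => (n : ℕ) % T = j₀),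
      f (x n.succ) with hZdef
  -- product identity : the weighted product equals exp(s * Z j₀ x)
  have hprodZ : ∀ (j₀ : ℕ) (x : Fin (N+1) → Fin d),
      (∏ n : Fin N, gfun T j₀ s f ((n : ℕ)+1) (x n.succ)) = Real.exp (s * Z j₀ x) := by
    intro j₀ x
    have hterm : ∀ n : Fin N, gfun T j₀ s f ((n : ℕ)+1) (x n.succ)
        = if ((n : ℕ) % T = j₀) then Real.exp (s * f (x n.succ)) else 1 := by
      intro n
      unfold gfun
      rw [Nat.add_sub_cancel]
      by_cases h : (n : ℕ) % T = j₀
      · rw [if_pos ⟨h, by omega⟩, if_pos h]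
      · rw [if_neg (by tauto), if_neg h]
    rw [Finset.prod_congr rfl fun n _ => hterm n, ← Finset.prod_filter]
    rw [hZdef, Finset.mul_sum, Real.exp_sum]
  -- the MGF bound for each interleaved class
  have hclass : ∀ j₀, j₀ < T →
      (∑ x : Fin (N+1) → Fin d, pathMass P π N x * Real.exp (s * Z j₀ x))
        ≤ B ^ (m'+1) := by
    intro j₀ hj₀
    have hps := path_sum P (gfun T j₀ s f) π N (fun _ => 1)
    have e1 : ∀ x : Fin (N+1) → Fin d,
        pathMass P π N x * ((∏ n : Fin N, gfun T j₀ s f ((n : ℕ)+1) (x n.succ)) *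
          (fun _ : Fin d => (1:ℝ)) (x (Fin.last N)))
        = pathMass P π N x * Real.exp (s * Z j₀ x) := by
      intro x
      rw [hprodZ j₀ x]
      ring
    rw [Finset.sum_congr rfl fun x _ => (e1 x).symm, hps]
    have e2 : ∑ j, evol P (gfun T j₀ s f) π N j * (fun _ : Fin d => (1:ℝ)) j
        = ∑ j, evol P (gfun T j₀ s f) π N j := Finset.sum_congr rfl fun j _ => mul_one _
    rw [e2, hm']
    exact evol_gfun_bound hP hπ0 hπ1 hπs hf hs0.le hs1 hπf hT1 hrow hj₀ m'
  -- Chernoff-Markov step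
  have hmass : ∀ x : Fin (N+1) → Fin d, 0 ≤ pathMass P π N x :=
    fun x => pathMass_nonneg hP hπ0 x
  have step1 : pathProb P π N (fun x => θ ≤ (1 / (N:ℝ)) * ∑ n : Fin N, f (x n.succ))
      ≤ ∑ x : Fin (N+1) → Fin d,
          pathMass P π N x * (Real.exp (-(t * N * θ)) *
            Real.exp (t * ∑ n : Fin N, f (x n.succ))) := by
    unfold pathProb
    refine Finset.sum_le_sum fun x _ => ?_
    split_ifs with hx
    · have hx' : θ ≤ 1 / (N:ℝ) * ∑ n : Fin N, f (x n.succ) := hx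
      have hS : (N:ℝ) * θ ≤ ∑ n : Fin N, f (x n.succ) := by
        have h2 : (N:ℝ) * θ ≤ (N:ℝ) * (1/(N:ℝ) * ∑ n : Fin N, f (x n.succ)) :=
          mul_le_mul_of_nonneg_left hx' hN0R.le
        have h3 : (N:ℝ) * (1/(N:ℝ) * ∑ n : Fin N, f (x n.succ))
            = ∑ n : Fin N, f (x n.succ) := by
          field_simp
        linarith
      have hexp : 0 ≤ -(t * N * θ) + t * ∑ n : Fin N, f (x n.succ) := by
        have := mul_le_mul_of_nonneg_left hS ht0.le
        nlinarith
      calc pathMass P π N x = pathMass P π N x * 1 := (mul_one _).symm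
        _ ≤ pathMass P π N x * (Real.exp (-(t * N * θ)) *
              Real.exp (t * ∑ n : Fin N, f (x n.succ))) := by
            refine mul_le_mul_of_nonneg_left ?_ (hmass x)
            rw [← Real.exp_add]
            exact Real.one_le_exp hexp
    · exact mul_nonneg (hmass x) (mul_nonneg (Real.exp_pos _).le (Real.exp_pos _).le)
  -- AM-GM step pointwise in x
  have step2 : ∀ x : Fin (N+1) → Fin d,
      Real.exp (t * ∑ n : Fin N, f (x n.succ))
        ≤ (1/(T:ℝ)) * ∑ j₀ ∈ Finset.range T, Real.exp (s * Z j₀ x) := by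
    intro x
    have hfib : (∑ n : Fin N, f (x n.succ)) = ∑ j₀ ∈ Finset.range T, Z j₀ x := by
      rw [hZdef]
      exact (Finset.sum_fiberwise_of_maps_to
        (fun n _ => Finset.mem_range.mpr (Nat.mod_lt _ (by omega))) _).symm
    rw [hfib, Finset.mul_sum, Real.exp_sum]
    have hamgm := amgm_pow (by omega : 0 < T) (fun j₀ => Real.exp (t * Z j₀ x))
      (fun j _ => (Real.exp_pos _).le)
    have hpow : ∀ j₀, Real.exp (t * Z j₀ x) ^ T = Real.exp (s * Z j₀ x) := by
      intro j₀
      rw [← Real.exp_nat_mul]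
      congr 1
      rw [htdef]
      field_simp
      try ring
    calc ∏ j₀ ∈ Finset.range T, Real.exp (t * Z j₀ x)
        ≤ (1/(T:ℝ)) * ∑ j₀ ∈ Finset.range T, Real.exp (t * Z j₀ x) ^ T := hamgm
      _ = (1/(T:ℝ)) * ∑ j₀ ∈ Finset.range T, Real.exp (s * Z j₀ x) := by
          rw [Finset.sum_congr rfl fun j₀ _ => hpow j₀]
  -- combine
  have step3 : ∑ x : Fin (N+1) → Fin d,
      pathMass P π N x * Real.exp (t * ∑ n : Fin N, f (x n.succ)) ≤ B ^ (m'+1) := by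
    calc ∑ x : Fin (N+1) → Fin d,
        pathMass P π N x * Real.exp (t * ∑ n : Fin N, f (x n.succ))
        ≤ ∑ x : Fin (N+1) → Fin d,
            pathMass P π N x * ((1/(T:ℝ)) * ∑ j₀ ∈ Finset.range T, Real.exp (s * Z j₀ x)) :=
          Finset.sum_le_sum fun x _ => mul_le_mul_of_nonneg_left (step2 x) (hmass x)
      _ = ∑ x : Fin (N+1) → Fin d, ∑ j₀ ∈ Finset.range T,
            (1/(T:ℝ)) * (pathMass P π N x * Real.exp (s * Z j₀ x)) := by
          refine Finset.sum_congr rfl fun x _ => ?_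
          rw [Finset.mul_sum, Finset.mul_sum]
          exact Finset.sum_congr rfl fun j₀ _ => by ring
      _ = ∑ j₀ ∈ Finset.range T,
            (1/(T:ℝ)) * ∑ x : Fin (N+1) → Fin d, pathMass P π N x * Real.exp (s * Z j₀ x) := by
          rw [Finset.sum_comm]
          exact Finset.sum_congr rfl fun j₀ _ => (Finset.mul_sum _ _ _).symm
      _ = (1/(T:ℝ)) * ∑ j₀ ∈ Finset.range T,
            ∑ x : Fin (N+1) → Fin d, pathMass P π N x * Real.exp (s * Z j₀ x) :=
          (Finset.mul_sum _ _ _).symm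
      _ ≤ (1/(T:ℝ)) * ∑ j₀ ∈ Finset.range T, B ^ (m'+1) := by
          refine mul_le_mul_of_nonneg_left ?_ (by positivity)
          exact Finset.sum_le_sum fun j₀ hj₀ => hclass j₀ (Finset.mem_range.mp hj₀)
      _ = B ^ (m'+1) := by
          rw [Finset.sum_const, Finset.card_range, nsmul_eq_mul]
          field_simp
  -- final computation
  have final : Real.exp (-(t * N * θ)) * B ^ (m'+1) ≤ Real.exp (-(N:ℝ) * s^2 / (2*T)) := by
    rw [hBdef, ← Real.exp_nat_mul, ← Real.exp_add]
    apply Real.exp_le_exp.mpr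
    have hNR : (N:ℝ) = (T:ℝ) * ((m':ℝ)+1) := by
      rw [hm']
      push_cast
      ring
    have hm1R : (1:ℝ) ≤ (m':ℝ)+1 := by
      have : (0:ℝ) ≤ (m':ℝ) := Nat.cast_nonneg m'
      linarith
    rw [hNR, htdef]
    have hTne : (T:ℝ) ≠ 0 := ne_of_gt hT0R
    have e1 : s / (T:ℝ) * ((T:ℝ) * ((m':ℝ)+1)) = s * ((m':ℝ)+1) := by
      field_simp
      try ring
    rw [e1]
    have e2 : -((T:ℝ) * ((m':ℝ)+1)) * s^2 / (2*(T:ℝ)) = -(((m':ℝ)+1) * s^2 / 2) := by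
      field_simp
    rw [e2]
    push_cast
    have hθν : ν - θ ≤ -s := by linarith
    have h3 : ((m':ℝ)+1) * s * (ν - θ) ≤ ((m':ℝ)+1) * s * (-s) := by
      refine mul_le_mul_of_nonneg_left hθν ?_
      positivity
    nlinarith [h3]
  calc pathProb P π N (fun x => θ ≤ (1 / (N:ℝ)) * ∑ n : Fin N, f (x n.succ))
      ≤ ∑ x : Fin (N+1) → Fin d,
          pathMass P π N x * (Real.exp (-(t * N * θ)) *
            Real.exp (t * ∑ n : Fin N, f (x n.succ))) := step1
    _ = Real.exp (-(t * N * θ)) * ∑ x : Fin (N+1) → Fin d,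
          pathMass P π N x * Real.exp (t * ∑ n : Fin N, f (x n.succ)) := by
        rw [Finset.mul_sum]
        exact Finset.sum_congr rfl fun x _ => by ring
    _ ≤ Real.exp (-(t * N * θ)) * B ^ (m'+1) :=
        mul_le_mul_of_nonneg_left step3 (Real.exp_pos _).le
    _ ≤ Real.exp (-(N:ℝ) * s^2 / (2*T)) := final

end ChunkSeven
end MarkovProofAux

/-- error guarantee for the fixed-sample-size test `𝒯_fix`
(Theorem `thm:seq-err-all-adapt`, part for `algfix`). -/
theorem fixed_test_error_bound
    {d : ℕ} (hd : 0 < d)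
    (P : Matrix (Fin d) (Fin d) ℝ) (π f : Fin d → ℝ)
    (hP : IsTransMat P) (hirr : IsIrreducibleMat P) (haper : IsAperiodicMat P)
    (hπ : IsStationaryDist P π)
    (hf : ∀ i, f i ∈ Set.Icc (0 : ℝ) 1)
    (μ : ℝ) (hμ : μ = ∑ i, π i * f i)
    (α : ℝ) (hα : α ∈ Set.Ioo (0 : ℝ) 1)
    (r : ℝ) (hr : r ∈ Set.Ioo (0 : ℝ) 1) (δ : ℝ) (hδ : 0 < δ)
    (T : ℕ) (hT : T = fMixTime P π f δ)
    (N : ℕ) (hN : 0 < N) (hdvd : T ∣ N)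
    (hNbig : 2 * (T : ℝ) * Real.log (1 / α) / δ ^ 2 ≤ (N : ℝ)) :
    (μ ≤ r - δ →
      pathProb P π N (fun x => r + δ ≤ (1 / (N : ℝ)) * ∑ n : Fin N, f (x n.succ)) ≤ α) ∧
    (r + δ ≤ μ →
      pathProb P π N (fun x => (1 / (N : ℝ)) * ∑ n : Fin N, f (x n.succ) ≤ r - δ) ≤ α) := by
  obtain ⟨hπpos, hπ1, hπs⟩ := hπ
  have hπ0 : ∀ i, 0 ≤ π i := fun i => (hπpos i).le
  have hf' : ∀ i, 0 ≤ f i ∧ f i ≤ 1 := fun i => ⟨(hf i).1, (hf i).2⟩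
  have hne := mixSet_nonempty hd hP hirr haper hπ0 hπ1 hπs hf hδ
  have hTmem : T ∈ {n : ℕ | 1 ≤ n ∧ ∀ i, fDisc f (fun j => (P ^ n) i j) π ≤ δ} := by
    rw [hT, fMixTime]
    exact Nat.sInf_mem hne
  obtain ⟨hT1, hTmix⟩ := hTmem
  have hrowbound : ∀ i, |(∑ j, (P ^ T) i j * f j) - μ| ≤ δ := by
    intro i
    have h := hTmix i
    rw [fDisc] at h
    rw [hμ]
    exact h
  have hμ0 : 0 ≤ μ := by
    rw [hμ]
    exact Finset.sum_nonneg fun i _ => mul_nonneg (hπ0 i) (hf i).1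
  have hμ1 : μ ≤ 1 := by
    rw [hμ]
    calc ∑ i, π i * f i ≤ ∑ i, π i * 1 :=
          Finset.sum_le_sum fun i _ => mul_le_mul_of_nonneg_left (hf i).2 (hπ0 i)
      _ = 1 := by simp only [mul_one]; exact hπ1
  have hT0R : (0:ℝ) < (T:ℝ) := by exact_mod_cast hT1
  have hδ2 : (0:ℝ) < δ^2 := by positivity
  have hexpα : Real.exp (-(N:ℝ) * δ^2 / (2*(T:ℝ))) ≤ α := by
    have hlog : Real.log (1/α) = -Real.log α := by rw [one_div, Real.log_inv]
    rw [hlog, div_le_iff₀ hδ2] at hNbig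
    have hle : -(N:ℝ) * δ^2 / (2*(T:ℝ)) ≤ Real.log α := by
      rw [div_le_iff₀ (by positivity)]
      nlinarith [hNbig]
    calc Real.exp (-(N:ℝ) * δ^2 / (2*(T:ℝ))) ≤ Real.exp (Real.log α) :=
          Real.exp_le_exp.mpr hle
      _ = α := Real.exp_log hα.1
  constructor
  · -- upper-tail test
    intro hμle
    have hδ1 : δ ≤ 1 := by
      have := hr.2
      linarith [hμ0]
    have hπf : ∑ i, π i * f i ≤ μ + δ := by rw [← hμ]; linarith
    have hrow : ∀ i, ∑ j, (P ^ T) i j * f j ≤ μ + δ := by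
      intro i
      have := abs_le.mp (hrowbound i)
      linarith [this.2]
    have hgap : (μ + δ) + δ ≤ r + δ := by linarith
    exact (master hP hπ0 hπ1 hπs hf' hT1 hN hdvd hδ hδ1 hπf hrow hgap).trans hexpα
  · -- lower-tail test
    intro hμge
    have hδ1 : δ ≤ 1 := by
      have := hr.1
      linarith [hμ1]
    set f2 : Fin d → ℝ := fun i => 1 - f i with hf2def
    have hf2 : ∀ i, 0 ≤ f2 i ∧ f2 i ≤ 1 := fun i => ⟨by simp [hf2def]; linarith [(hf i).2],
      by simp [hf2def]; linarith [(hf i).1]⟩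
    have hN0R : (0:ℝ) < (N:ℝ) := by exact_mod_cast hN
    have hEq : pathProb P π N (fun x => (1/(N:ℝ)) * ∑ n : Fin N, f (x n.succ) ≤ r - δ)
        = pathProb P π N (fun x => (1 - r + δ) ≤ (1/(N:ℝ)) * ∑ n : Fin N, f2 (x n.succ)) := by
      unfold pathProb
      refine Finset.sum_congr rfl fun x _ => ?_
      refine if_congr ?_ rfl rfl
      show (1/(N:ℝ)) * (∑ n : Fin N, f (x n.succ)) ≤ r - δ ↔
        (1 - r + δ) ≤ (1/(N:ℝ)) * ∑ n : Fin N, f2 (x n.succ)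
      have hsum : ∑ n : Fin N, f2 (x n.succ) = (N:ℝ) - ∑ n : Fin N, f (x n.succ) := by
        rw [hf2def]
        rw [Finset.sum_sub_distrib, Finset.sum_const, Finset.card_univ, Fintype.card_fin,
          nsmul_eq_mul, mul_one]
      rw [hsum]
      have hc : (1/(N:ℝ)) * ((N:ℝ) - ∑ n : Fin N, f (x n.succ))
          = 1 - (1/(N:ℝ)) * ∑ n : Fin N, f (x n.succ) := by
        field_simp
      rw [hc]
      constructor <;> intro h <;> linarith
    rw [hEq]
    have hπf2 : ∑ i, π i * f2 i ≤ (1 - μ) + δ := by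
      have : ∑ i, π i * f2 i = 1 - μ := by
        rw [hf2def, hμ]
        simp only [mul_sub, mul_one]
        rw [Finset.sum_sub_distrib, hπ1]
      linarith [this.le, hδ]
    have hrow2 : ∀ i, ∑ j, (P ^ T) i j * f2 j ≤ (1 - μ) + δ := by
      intro i
      have habs := abs_le.mp (hrowbound i)
      have hrs : ∑ j, (P ^ T) i j * f2 j = 1 - ∑ j, (P ^ T) i j * f j := by
        rw [hf2def]
        simp only [mul_sub, mul_one]
        rw [Finset.sum_sub_distrib, (transMat_pow hP T).2 i]
      rw [hrs]
      linarith [habs.1]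
    have hgap2 : ((1 - μ) + δ) + δ ≤ (1 - r + δ) := by linarith
    exact (master hP hπ0 hπ1 hπs hf2 hT1 hN hdvd hδ hδ1 hπf2 hrow2 hgap2).trans hexpα
end
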